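/- With Q(A) = ∫_C U(σ) A U(σ)* dν(σ) as above, suppose ν charges all open subsets of C, U is continuous and one-to-one, and U(σ₀) = 1 for some σ₀ ∈ C. If A satisfies Tr[(QA)*(QA)] = Tr[A* A], then U(σ) A U(σ)* = A for all σ ∈ C; i.e., the eigenspace of Q with eigenvalue 1 (acting on Hilbert–Schmidt operators) is exactly the commutant of {U(σ) : σ ∈ C}. -/

import Mathlib

open Matrix MeasureTheory
open scoped Matrix.Norms.L2Operator

/-- The averaged conjugation operator `Q(A) = ∫ U(σ) A U(σ)* dν(σ)`. -/
noncomputable def Qop {C : Type*} [MeasurableSpace C] {n : ℕ}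
    (ν : Measure C) (U : C → Matrix (Fin n) (Fin n) ℂ)
    (A : Matrix (Fin n) (Fin n) ℂ) : Matrix (Fin n) (Fin n) ℂ :=
  ∫ σ, U σ * A * (U σ)ᴴ ∂ν

/-!
Write `f σ = U(σ) A U(σ)*` and `Q = Qop ν U A = ∫ f`. In the Hilbert–Schmidt inner product,
`∫ ‖f σ - Q‖² = ∫ ‖f σ‖² - ‖Q‖²`, and `‖f σ‖ = ‖A‖` because `U(σ)` is unitary. So the
hypothesis `‖Q‖ = ‖A‖` makes the continuous function `‖f - Q‖²` integrate to `0`; as `ν` charges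
every open set, `f σ = Q` for all `σ`, and evaluating at `σ₀` gives `Q = A`.
-/

section Variance

variable {α E : Type*} [MeasurableSpace α] {μ : Measure α} [IsProbabilityMeasure μ]
  [NormedAddCommGroup E] [InnerProductSpace ℝ E] [CompleteSpace E]

theorem integral_norm_sub_integral_sq {f : α → E} (hf : MemLp f 2 μ) :
    ∫ x, ‖f x - ∫ y, f y ∂μ‖ ^ 2 ∂μ = ∫ x, ‖f x‖ ^ 2 ∂μ - ‖∫ x, f x ∂μ‖ ^ 2 := by
  set m := ∫ y, f y ∂μ
  have hf1 : Integrable f μ := hf.integrable one_le_two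
  have hsq : Integrable (fun x => ‖f x‖ ^ 2) μ := hf.integrable_norm_pow'
  have hinner : Integrable (fun x => 2 * inner ℝ m (f x)) μ := (hf1.const_inner m).const_mul 2
  have hmean : ∫ x, 2 * inner ℝ m (f x) ∂μ = 2 * ‖m‖ ^ 2 := by
    rw [integral_const_mul, integral_inner hf1, real_inner_self_eq_norm_sq]
  simp_rw [norm_sub_sq_real, real_inner_comm m]
  rw [integral_add (by exact hsq.sub hinner) (integrable_const _), integral_sub hsq hinner, hmean]
  simp only [integral_const, probReal_univ, one_smul]
  ring

theorem eq_integral_of_integral_norm_sq_le [TopologicalSpace α] [OpensMeasurableSpace α]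
    [μ.IsOpenPosMeasure] {f : α → E} (hf : Continuous f) (hf2 : MemLp f 2 μ)
    (h : ∫ x, ‖f x‖ ^ 2 ∂μ ≤ ‖∫ x, f x ∂μ‖ ^ 2) (x : α) : f x = ∫ y, f y ∂μ := by
  set m := ∫ y, f y ∂μ
  have hdev : Continuous fun x => ‖f x - m‖ ^ 2 := by fun_prop
  have hdev_int : Integrable (fun x => ‖f x - m‖ ^ 2) μ :=
    (hf2.sub (memLp_const m)).integrable_norm_pow'
  have hdev_zero : ∫ x, ‖f x - m‖ ^ 2 ∂μ = 0 :=
    le_antisymm (by linarith [integral_norm_sub_integral_sq hf2])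
      (integral_nonneg fun x => by positivity)
  have hae := (integral_eq_zero_iff_of_nonneg (fun x => by positivity) hdev_int).mp hdev_zero
  have hx : ‖f x - m‖ ^ 2 = 0 := congrFun ((hdev.ae_eq_iff_eq μ continuous_const).mp hae) x
  rwa [sq_eq_zero_iff, norm_eq_zero, sub_eq_zero] at hx

end Variance

namespace Matrix

/-- Mathlib puts no Hilbert–Schmidt inner product on matrices; we transport them to
`EuclideanSpace`, where the norm becomes the Hilbert–Schmidt norm. -/
noncomputable def toEuclideanEntries {m n 𝕜 : Type*} [Fintype m] [Fintype n] [RCLike 𝕜] :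
    Matrix m n 𝕜 ≃L[𝕜] EuclideanSpace 𝕜 (m × n) :=
  (LinearEquiv.curry 𝕜 𝕜 m n).symm.toContinuousLinearEquiv.trans
    (EuclideanSpace.equiv (m × n) 𝕜).symm

theorem norm_toEuclideanEntries_sq {m n 𝕜 : Type*} [Fintype m] [Fintype n] [RCLike 𝕜]
    (M : Matrix m n 𝕜) :
    ‖toEuclideanEntries M‖ ^ 2 = RCLike.re (trace (Mᴴ * M)) := by
  simp only [EuclideanSpace.norm_sq_eq, Fintype.sum_prod_type, trace, diag_apply, mul_apply,
    conjTranspose_apply, RCLike.star_def, RCLike.conj_mul, map_sum, RCLike.re_ofReal_pow]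
  exact Finset.sum_comm

theorem trace_conjTranspose_mul_self_unitary_conj {n α : Type*} [Fintype n] [DecidableEq n]
    [CommRing α] [StarRing α] {U : Matrix n n α} (hU : U ∈ unitaryGroup n α)
    (A : Matrix n n α) :
    trace ((U * A * Uᴴ)ᴴ * (U * A * Uᴴ)) = trace (Aᴴ * A) := by
  have hUU : Uᴴ * U = 1 := hU.1
  have hconj : (U * A * Uᴴ)ᴴ * (U * A * Uᴴ) = U * (Aᴴ * A) * Uᴴ := by
    simp only [conjTranspose_mul, conjTranspose_conjTranspose, Matrix.mul_assoc]
    rw [← Matrix.mul_assoc Uᴴ U, hUU, Matrix.one_mul]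
  rw [hconj, trace_mul_cycle, hUU, Matrix.one_mul]

end Matrix

theorem Qop_fixed_points_eq_commutant_general {C : Type*} [MetricSpace C] [CompactSpace C]
    [MeasurableSpace C] [BorelSpace C] {n : ℕ}
    (ν : Measure C) [IsProbabilityMeasure ν]
    (hν : ∀ O : Set C, IsOpen O → O.Nonempty → 0 < ν O)
    (U : C → Matrix (Fin n) (Fin n) ℂ)
    (hUcont : Continuous U)
    (hUunit : ∀ σ, U σ ∈ Matrix.unitaryGroup (Fin n) ℂ)
    (σ₀ : C) (hσ₀ : U σ₀ = 1)
    (A : Matrix (Fin n) (Fin n) ℂ)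
    (hA : Matrix.trace ((Qop ν U A)ᴴ * Qop ν U A) = Matrix.trace (Aᴴ * A)) :
    ∀ σ, U σ * A * (U σ)ᴴ = A := by
  have : ν.IsOpenPosMeasure := ⟨fun O hO hne => (hν O hO hne).ne'⟩
  let L : Matrix (Fin n) (Fin n) ℂ ≃L[ℂ] EuclideanSpace ℂ (Fin n × Fin n) := toEuclideanEntries
  have hf : Continuous fun σ => U σ * A * (U σ)ᴴ := by fun_prop
  have hLf : Continuous fun σ => L (U σ * A * (U σ)ᴴ) := L.continuous.comp hf
  have hint : ∫ σ, L (U σ * A * (U σ)ᴴ) ∂ν = L (Qop ν U A) := L.integral_comp_comm _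
  have hconj_eq (σ : C) : U σ * A * (U σ)ᴴ = Qop ν U A := by
    refine L.injective ((eq_integral_of_integral_norm_sq_le hLf
      (hLf.memLp_of_hasCompactSupport (.of_compactSpace _)) ?_ σ).trans hint)
    simp only [hint, L, norm_toEuclideanEntries_sq, trace_conjTranspose_mul_self_unitary_conj
      (hUunit _), hA, integral_const, probReal_univ, one_smul, le_refl]
  have hQ : Qop ν U A = A := by simpa [hσ₀] using (hconj_eq σ₀).symm
  exact fun σ => (hconj_eq σ).trans hQ

/-- If `ν` charges all open sets, `U` is continuous, one-to-one, and takes the value `1`,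
then any Hilbert–Schmidt norm equality case `Tr[(QA)*(QA)] = Tr[A*A]` forces
`U(σ) A U(σ)* = A` for every `σ`: the eigenspace of `Q` with eigenvalue `1` is exactly
the commutant of `{U(σ) : σ ∈ C}`. -/
theorem Qop_fixed_points_eq_commutant {C : Type*} [MetricSpace C] [CompactSpace C]
    [MeasurableSpace C] [BorelSpace C] {n : ℕ}
    (ν : Measure C) [IsProbabilityMeasure ν]
    (hν : ∀ O : Set C, IsOpen O → O.Nonempty → 0 < ν O)
    (U : C → Matrix (Fin n) (Fin n) ℂ)
    (hUcont : Continuous U) (hUinj : Function.Injective U)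
    (hUunit : ∀ σ, U σ ∈ Matrix.unitaryGroup (Fin n) ℂ)
    (σ₀ : C) (hσ₀ : U σ₀ = 1)
    (A : Matrix (Fin n) (Fin n) ℂ)
    (hA : Matrix.trace ((Qop ν U A)ᴴ * Qop ν U A) = Matrix.trace (Aᴴ * A)) :
    ∀ σ, U σ * A * (U σ)ᴴ = A :=
  Qop_fixed_points_eq_commutant_general ν hν U hUcont hUunit σ₀ hσ₀ A hA
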